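/- arXiv:2011.08643 — 5 statements merged into one kernel-verified Lean document; each statement's English description precedes it below -/
import Mathlib

section
/- A set B ⊆ ℤ is the beta-set of some (necessarily unique) partition if and only if ℕ₀ ∩ B and (−ℕ) \ B are finite sets of the same cardinality. -/
/-- A partition, given as a weakly decreasing finitely-supported sequence of
natural numbers (`parts 0` is the first part). -/
structure SeqPartition where
  parts : ℕ →₀ ℕ
  antitone : ∀ ⦃i j : ℕ⦄, i ≤ j → parts j ≤ parts i

namespace SeqPartition

/-- The size `|λ|` of a partition. -/
def size (l : SeqPartition) : ℕ := l.parts.sum fun _ v => v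

/-- The beta-set `β(λ) = { λ_r − r : r ≥ 1 }` (here 0-indexed). -/
def betaSet (l : SeqPartition) : Set ℤ :=
  Set.range fun r : ℕ => (l.parts r : ℤ) - (r + 1)

/-- `RemoveHook h l m` : `m` is obtained from `l` by removing a rim `h`-hook;
in beta-set terms, an element `b` of `β(l)` is replaced by `b − h ∉ β(l)`. -/
def RemoveHook (h : ℕ) (l m : SeqPartition) : Prop :=
  ∃ b : ℤ, b ∈ l.betaSet ∧ b - (h : ℤ) ∉ l.betaSet ∧
    m.betaSet = insert (b - (h : ℤ)) (l.betaSet \ {b})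

/-- `l` is an `s`-core: no rim `s`-hook can be removed. -/
def IsCore (s : ℕ) (l : SeqPartition) : Prop := ∀ m : SeqPartition, ¬ RemoveHook s l m

/-- `c` is the `s`-core of `l`: it is obtained from `l` by repeatedly removing
rim `s`-hooks, and is itself an `s`-core. -/
def HasCore (s : ℕ) (l c : SeqPartition) : Prop :=
  Relation.ReflTransGen (RemoveHook s) l c ∧ IsCore s c

/-- `IsConj l m` : `m` is the conjugate partition of `l`. -/
def IsConj (l m : SeqPartition) : Prop :=
  ∀ r : ℕ, m.parts r = Set.ncard {c : ℕ | r + 1 ≤ l.parts c}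

end SeqPartition

/-- The region `U_x = { x + as + bt : a, b > 0 }`. -/
def UpSet (s t : ℕ) (x : ℤ) : Set ℤ :=
  {n : ℤ | ∃ a b : ℕ, 0 < a ∧ 0 < b ∧ n = x + (a : ℤ) * s + (b : ℤ) * t}

/-- The region `L_x = { x − as − bt : a, b ≥ 0 }`. -/
def LowSet (s t : ℕ) (x : ℤ) : Set ℤ :=
  {n : ℤ | ∃ a b : ℕ, n = x - (a : ℤ) * s - (b : ℤ) * t}

/-- `x` is a pinch-point for `l` : `L_x ⊆ β(l)` and `β(l) ∩ U_x = ∅`. -/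
def PinchPoint (s t : ℕ) (x : ℤ) (l : SeqPartition) : Prop :=
  LowSet s t x ⊆ l.betaSet ∧ l.betaSet ∩ UpSet s t x = ∅

/-- The generator `w_i` of the affine symmetric group `W_s` in its level-`t`
action on `ℤ` : `n ↦ n + t` if `n ≡ (i−1)t − (s−1)(t−1)/2 (mod s)`,
`n ↦ n − t` if `n ≡ it − (s−1)(t−1)/2 (mod s)`, and `n ↦ n` otherwise. -/
def wgen (s t : ℕ) (i : ℤ) : ℤ → ℤ := fun n =>
  if (s : ℤ) ∣ (n + ((s : ℤ) - 1) * ((t : ℤ) - 1) / 2 - (i - 1) * t) then n + t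
  else if (s : ℤ) ∣ (n + ((s : ℤ) - 1) * ((t : ℤ) - 1) / 2 - i * t) then n - t
  else n

/-- The monoid of maps `ℤ → ℤ` generated by the `wgen s t i`.  Since each
generator is an involution, this is the image of the level-`t` action
of the affine symmetric group `W_s` on `ℤ`. -/
def WMon (s t : ℕ) : Submonoid (Function.End ℤ) :=
  Submonoid.closure {f | ∃ i : ℤ, f = wgen s t i}

/-- `l` is `(s,t)`-minimal: no partition of smaller size has the same
`s`-core and `t`-core. -/
def MinimalPart (s t : ℕ) (l : SeqPartition) : Prop :=
  ∀ (m σ τ : SeqPartition), SeqPartition.HasCore s l σ → SeqPartition.HasCore t l τ →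
    SeqPartition.HasCore s m σ → SeqPartition.HasCore t m τ → l.size ≤ m.size

/-!
A beta-set is the range of the strictly decreasing sequence `r ↦ λ_r - r`, which equals `-r` for
large `r`, and the partition is recovered from the sequence, hence from its range. Conversely a set
`B` that is bounded above and contains almost all negative integers is the range of its decreasing
enumeration `b_1 > b_2 > ⋯`, and `λ_r = b_r + r` is a partition as soon as `b_r = -r` for large
`r`. Counting the `n - 1` elements of `B` above some `b_n < 0` that lies below every negative
integer missing from `B` gives `n - 1 = |ℕ₀ ∩ B| + (-b_n - 1) - |(-ℕ) \ B|`, so `b_n = -n`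
exactly when the two cardinalities agree.
-/

open Set

lemma exists_strictAnti_range_eq {B : Set ℤ} (hbdd : BddAbove B) (hinf : B.Infinite) :
    ∃ f : ℕ → ℤ, StrictAnti f ∧ range f = B := by
  obtain ⟨M, hM⟩ := hbdd
  -- reflect the increasing enumeration of `{k : ℕ | M - k ∈ B}`
  set p : ℕ → Prop := fun k => M - k ∈ B
  have hB : B = (fun k : ℕ => M - k) '' Set.ofPred p := by
    ext b
    constructor
    · intro hb
      have hbM := hM hb
      refine ⟨(M - b).toNat, ?_, by simp only; omega⟩
      show M - ((M - b).toNat : ℤ) ∈ B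
      rwa [Int.toNat_of_nonneg (sub_nonneg.2 hbM), sub_sub_cancel]
    · rintro ⟨k, hk, rfl⟩
      exact hk
  have hp : (Set.ofPred p).Infinite := fun h => hinf (hB ▸ h.image _)
  refine ⟨fun n => M - Nat.nth p n, fun m n hmn => ?_, ?_⟩
  · have := Nat.nth_strictMono hp hmn
    simp only
    omega
  · rw [hB, ← Nat.range_nth_of_infinite hp, ← range_comp]
    rfl

lemma ncard_inter_Ioi_add_ncard_Ioo_sdiff {B : Set ℤ} (hB : (B ∩ {b | 0 ≤ b}).Finite) {x : ℤ}
    (hx : x < 0) :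
    (B ∩ Ioi x).ncard + (Ioo x 0 \ B).ncard = (B ∩ {b | 0 ≤ b}).ncard + (-x - 1).toNat := by
  have hfin : (B ∩ Ioi x).Finite :=
    (hB.union (finite_Ioo x 0)).subset fun b ⟨hb, hxb⟩ => by
      by_cases h : 0 ≤ b
      · exact Or.inl ⟨hb, h⟩
      · exact Or.inr ⟨hxb, not_le.1 h⟩
  have hnonneg : B ∩ Ioi x ∩ {b | 0 ≤ b} = B ∩ {b | 0 ≤ b} := by
    ext b
    simp only [mem_inter_iff, mem_Ioi, mem_ofPred_eq]
    grind
  have hneg : (B ∩ Ioi x) \ {b | 0 ≤ b} = Ioo x 0 ∩ B := by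
    ext b
    simp only [mem_sdiff, mem_inter_iff, mem_Ioi, mem_Ioo, mem_ofPred_eq]
    grind
  rw [← ncard_inter_add_ncard_sdiff_eq_ncard (B ∩ Ioi x) {b | 0 ≤ b} hfin, hnonneg, hneg, add_assoc,
    ncard_inter_add_ncard_sdiff_eq_ncard _ _ (finite_Ioo x 0), ← Finset.coe_Ioo, ncard_coe_finset,
    Int.card_Ioo, zero_sub]

namespace StrictAnti

variable {f : ℕ → ℤ}

lemma antitone_add_id (hf : StrictAnti f) : Antitone fun n => f n + n :=
  antitone_nat_of_succ_le fun n => by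
    have := hf (Nat.lt_add_one n)
    push_cast
    omega

lemma neg_sub_one_le {N : ℕ} (hf : StrictAnti f) (hN : ∀ n, N ≤ n → f n = -n - 1) (n : ℕ) :
    -(n : ℤ) - 1 ≤ f n := by
  have h := hf.antitone_add_id (le_max_left n N)
  have := hN _ (le_max_right n N)
  simp only at h
  omega

lemma range_inter_Ioi (hf : StrictAnti f) (n : ℕ) : range f ∩ Ioi (f n) = f '' Iio n := by
  ext b
  constructor
  · rintro ⟨⟨m, rfl⟩, hm⟩
    exact ⟨m, hf.lt_iff_gt.1 hm, rfl⟩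
  · rintro ⟨m, hm, rfl⟩
    exact ⟨mem_range_self m, hf hm⟩

lemma ncard_range_inter_Ioi (hf : StrictAnti f) (n : ℕ) : (range f ∩ Ioi (f n)).ncard = n := by
  rw [hf.range_inter_Ioi, ncard_image_of_injective _ hf.injective, ncard_Iio_nat]

lemma add_ncard_neg_sdiff_range (hf : StrictAnti f) (hpos : (range f ∩ {b | 0 ≤ b}).Finite)
    {n : ℕ} (hn : f n < 0) (hgap : {b | b < 0} \ range f ⊆ Ioi (f n)) :
    n + ({b | b < 0} \ range f).ncard = (range f ∩ {b | 0 ≤ b}).ncard + (-f n - 1).toNat := by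
  have hneg : Ioo (f n) 0 \ range f = {b | b < 0} \ range f :=
    Subset.antisymm (fun b ⟨hb, hbf⟩ => ⟨hb.2, hbf⟩) fun b hb => ⟨⟨hgap hb, hb.1⟩, hb.2⟩
  have := ncard_inter_Ioi_add_ncard_Ioo_sdiff hpos hn
  rwa [hf.ncard_range_inter_Ioi, hneg] at this

lemma eventually_eq_neg_sub_one_iff (hf : StrictAnti f) :
    (∃ N : ℕ, ∀ n, N ≤ n → f n = -n - 1) ↔
      (range f ∩ {b | 0 ≤ b}).Finite ∧ ({b | b < 0} \ range f).Finite ∧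
        (range f ∩ {b | 0 ≤ b}).ncard = ({b | b < 0} \ range f).ncard := by
  constructor
  · rintro ⟨N, hN⟩
    have hfN : f N < 0 := by rw [hN N le_rfl]; omega
    have hgap : {b | b < 0} \ range f ⊆ Ioi (f N) := by
      rintro b ⟨hb : b < 0, hbf⟩
      by_contra hle
      have : f (-b - 1).toNat = b := by
        rw [hN _ (by simp only [mem_Ioi, not_lt, hN N le_rfl] at hle; omega)]
        omega
      exact hbf ⟨_, this⟩
    have hpos : (range f ∩ {b | 0 ≤ b}).Finite := by
      refine ((finite_Iio N).image f).subset ?_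
      rw [← hf.range_inter_Ioi]
      exact fun b ⟨hb, h0⟩ => ⟨hb, hfN.trans_le h0⟩
    refine ⟨hpos, (finite_Ioo (f N) 0).subset fun b hb => ⟨hgap hb, hb.1⟩, ?_⟩
    have := hf.add_ncard_neg_sdiff_range hpos hfN hgap
    rw [hN N le_rfl] at this
    omega
  · rintro ⟨hpos, hneg, hcard⟩
    obtain ⟨c, hc⟩ := hneg.bddBelow
    refine ⟨(f 0 - min c 0 + 1).toNat, fun n hn => ?_⟩
    have hfn : f n < min c 0 := by
      have := hf.antitone_add_id (Nat.zero_le n)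
      simp only at this
      omega
    have := hf.add_ncard_neg_sdiff_range hpos (by omega)
      fun b hb => (lt_min_iff.1 hfn).1.trans_le (hc hb)
    omega

end StrictAnti

namespace SeqPartition

def betaSeq (l : SeqPartition) (r : ℕ) : ℤ := l.parts r - (r + 1)

lemma betaSet_eq_range_betaSeq (l : SeqPartition) : l.betaSet = range l.betaSeq := rfl

lemma strictAnti_betaSeq (l : SeqPartition) : StrictAnti l.betaSeq :=
  strictAnti_nat_of_succ_lt fun n => by
    have := l.antitone (Nat.le_add_right n 1)
    simp only [betaSeq]
    push_cast
    omega

lemma betaSeq_eventually_eq (l : SeqPartition) : ∃ N : ℕ, ∀ n, N ≤ n → l.betaSeq n = -n - 1 := by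
  refine ⟨l.parts.support.sup id + 1, fun n hn => ?_⟩
  have : l.parts n = 0 := by
    by_contra h
    have := Finset.le_sup (f := id) (Finsupp.mem_support_iff.2 h)
    simp only [id] at this
    omega
  simp only [betaSeq, this]
  push_cast
  ring

lemma betaSet_injective : Function.Injective betaSet := by
  intro l m h
  have hseq :=
    (StrictMono.range_inj (γ := ℤᵒᵈ) l.strictAnti_betaSeq m.strictAnti_betaSeq).1 h
  obtain ⟨lp, _⟩ := l
  obtain ⟨mp, _⟩ := m
  congr
  ext r
  have := congrFun hseq r
  simp only [betaSeq] at this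
  omega

lemma exists_betaSet_eq_range {f : ℕ → ℤ} (hf : StrictAnti f) {N : ℕ}
    (hN : ∀ n, N ≤ n → f n = -n - 1) : ∃ l : SeqPartition, l.betaSet = range f := by
  have hsupp : ∀ n, (f n + n + 1).toNat ≠ 0 → n ∈ Finset.range N := by
    intro n hn
    by_contra h
    have := hN n (by simpa using h)
    omega
  have hparts (n : ℕ) : ((f n + n + 1).toNat : ℤ) = f n + n + 1 := by
    have := hf.neg_sub_one_le hN n
    omega
  refine ⟨⟨Finsupp.onFinset _ _ hsupp, fun i j hij => ?_⟩, ?_⟩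
  · have := hf.antitone_add_id hij
    simp only [Finsupp.onFinset_apply] at this ⊢
    omega
  · rw [betaSet_eq_range_betaSeq]
    congr 1
    funext n
    simp only [betaSeq, Finsupp.onFinset_apply, hparts]
    ring

end SeqPartition

/-- characterisation of beta-sets. -/
theorem stmt1 (B : Set ℤ) :
    (∃! l : SeqPartition, l.betaSet = B) ↔
      ((B ∩ {b : ℤ | 0 ≤ b}).Finite ∧ ({b : ℤ | b < 0} \ B).Finite ∧
        (B ∩ {b : ℤ | 0 ≤ b}).ncard = ({b : ℤ | b < 0} \ B).ncard) := by
  constructor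
  · rintro ⟨l, rfl, -⟩
    exact l.strictAnti_betaSeq.eventually_eq_neg_sub_one_iff.1 l.betaSeq_eventually_eq
  · rintro ⟨hpos, hneg, hcard⟩
    have hbdd : BddAbove B :=
      (hpos.bddAbove.union bddAbove_Iio).mono fun b hb => by
        by_cases h : 0 ≤ b
        · exact Or.inl ⟨hb, h⟩
        · exact Or.inr (not_le.1 h)
    have hinf : B.Infinite := fun hfin =>
      Iio_infinite (0 : ℤ) ((hneg.union hfin).subset fun b hb => by
        by_cases h : b ∈ B
        · exact Or.inr h
        · exact Or.inl ⟨hb, h⟩)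
    obtain ⟨f, hf, rfl⟩ := exists_strictAnti_range_eq hbdd hinf
    obtain ⟨N, hN⟩ := hf.eventually_eq_neg_sub_one_iff.2 ⟨hpos, hneg, hcard⟩
    obtain ⟨l, hl⟩ := SeqPartition.exists_betaSet_eq_range hf hN
    exact ⟨l, hl, fun m hm => SeqPartition.betaSet_injective (hm.trans hl.symm)⟩
end

section
/- For any partition λ, the beta-set of the conjugate partition satisfies β(λ') = ℤ \ { −1 − b : b ∈ β(λ) }. -/
/-!
Writing `d r = r - λ_r` and `e c = λ'_c - c - 1`, we have `-1 - β(λ) = range d` and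
`β(λ') = range e`. The two ranges are disjoint: `e c = d r` means `λ'_c + λ_r = r + c + 1`,
but `c < λ_r ↔ r < λ'_c`, so the left side is either at least `r + c + 2` or at most `r + c`.
They cover `ℤ`: since `d` is monotone and unbounded, an integer `n` missing from its range lies
strictly between `d (k - 1)` and `d k` for the least `k` with `n ≤ d k`; then the rows of length
greater than `c = k - 1 - n` are exactly the first `k`, so `λ'_c = k` and `e c = n`.
-/

namespace SeqPartition

lemma setOf_lt_parts_eq_Iio (l : SeqPartition) (r : ℕ) :
    ∃ k, {c : ℕ | r < l.parts c} = Set.Iio k := by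
  have hex : ∃ c, l.parts c ≤ r := by
    obtain ⟨c, hc⟩ := l.parts.hasFiniteSupport.exists_notMem
    exact ⟨c, by simp [Function.notMem_support.mp hc]⟩
  refine ⟨Nat.find hex, Set.ext fun c => ?_⟩
  simp only [Set.mem_ofPred_eq, Set.mem_Iio, Nat.lt_find_iff, not_le]
  exact ⟨fun hc c' hc' => hc.trans_le (l.antitone hc'), fun hc => hc c le_rfl⟩

lemma IsConj.lt_parts_iff {l m : SeqPartition} (h : IsConj l m) (r c : ℕ) :
    r < l.parts c ↔ c < m.parts r := by
  obtain ⟨k, hk⟩ := l.setOf_lt_parts_eq_Iio r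
  have hmr : m.parts r = k := by
    rw [h r, show {c : ℕ | r + 1 ≤ l.parts c} = Set.Iio k from hk, ← Finset.coe_Iio,
      Set.ncard_coe_finset, Nat.card_Iio]
  rw [hmr]
  exact Set.ext_iff.mp hk c

lemma IsConj.parts_eq_of_forall_lt_parts_iff {l m : SeqPartition} (h : IsConj l m) {c k : ℕ}
    (hk : ∀ r, c < l.parts r ↔ r < k) : m.parts c = k :=
  eq_of_forall_lt_iff fun r => (h.lt_parts_iff c r).symm.trans (hk r)

lemma IsConj.parts_add_parts_ne {l m : SeqPartition} (h : IsConj l m) (r c : ℕ) :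
    m.parts c + l.parts r ≠ r + c + 1 := by
  by_cases hr : r < m.parts c
  · have hc : c < l.parts r := (h.lt_parts_iff c r).mpr hr
    omega
  · have hc : ¬ c < l.parts r := fun hc => hr ((h.lt_parts_iff c r).mp hc)
    omega

lemma IsConj.exists_parts_sub_eq {l m : SeqPartition} (h : IsConj l m) (n : ℤ)
    (hn : ∀ r : ℕ, (r : ℤ) - l.parts r ≠ n) : ∃ c : ℕ, (m.parts c : ℤ) - (c + 1) = n := by
  have hex : ∃ r : ℕ, n ≤ (r : ℤ) - l.parts r := by
    refine ⟨(n + l.parts 0).toNat, ?_⟩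
    have := l.antitone (Nat.zero_le (n + l.parts 0).toNat)
    omega
  set k := Nat.find hex
  have hk : n < (k : ℤ) - l.parts k := lt_of_le_of_ne (Nat.find_spec hex) (hn k).symm
  have hbelow : ∀ r < k, (r : ℤ) - l.parts r < n := fun r hr => not_le.mp (Nat.find_min hex hr)
  refine ⟨((k : ℤ) - 1 - n).toNat, ?_⟩
  have hc : (((k : ℤ) - 1 - n).toNat : ℤ) = k - 1 - n := Int.toNat_of_nonneg (by omega)
  suffices m.parts ((k : ℤ) - 1 - n).toNat = k by omega
  refine h.parts_eq_of_forall_lt_parts_iff fun r => ⟨fun hr => ?_, fun hr => ?_⟩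
  · by_contra! hkr
    have := l.antitone hkr
    omega
  · have := hbelow (k - 1) (by omega)
    have := l.antitone (Nat.le_sub_one_of_lt hr)
    omega

end SeqPartition

/-- the beta-set of the conjugate partition. -/
theorem stmt2 (l m : SeqPartition) (h : SeqPartition.IsConj l m) :
    m.betaSet = Set.univ \ ((fun b : ℤ => -1 - b) '' l.betaSet) := by
  ext n
  simp only [SeqPartition.betaSet, Set.mem_sdiff, Set.mem_univ, Set.mem_image,
    true_and, not_exists, not_and]
  constructor
  · rintro ⟨c, rfl⟩ _ ⟨r, rfl⟩ hrc
    exact h.parts_add_parts_ne r c (by beta_reduce at hrc; omega)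
  · intro hn
    exact h.exists_parts_sub_eq n fun r hr => hn _ ⟨r, rfl⟩ (by beta_reduce; omega)
end

section
/- Let s, t be coprime integers greater than 1, σ an s-core, τ a t-core, and n ∈ ℕ₀. Then the set P_{σ,τ}(n) of partitions of n with s-core σ and t-core τ is non-empty if and only if n ≥ m_{σ,τ} and n ≡ m_{σ,τ} (mod st), where m_{σ,τ} is the minimal size of a partition with s-core σ and t-core τ. Moreover if n > m_{σ,τ} and n ≡ m_{σ,τ} (mod st) then |P_{σ,τ}(n)| ≥ st. -/
namespace SeqPartition

open Set Relation

def beta (l : SeqPartition) (r : ℕ) : ℤ := (l.parts r : ℤ) - (r + 1)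

theorem betaSet_eq_range_beta (l : SeqPartition) : l.betaSet = range l.beta := rfl

theorem beta_mem_betaSet (l : SeqPartition) (r : ℕ) : l.beta r ∈ l.betaSet := ⟨r, rfl⟩

theorem beta_strictAnti (l : SeqPartition) : StrictAnti l.beta := by
  intro i j hij
  have := l.antitone hij.le
  simp only [beta]
  omega

theorem neg_succ_le_beta (l : SeqPartition) (r : ℕ) : -((r : ℤ) + 1) ≤ l.beta r := by
  simp only [beta]
  omega

theorem le_beta_zero_of_mem {l : SeqPartition} {z : ℤ} (hz : z ∈ l.betaSet) :
    z ≤ l.beta 0 := by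
  obtain ⟨r, rfl⟩ := hz
  exact l.beta_strictAnti.antitone r.zero_le

theorem parts_injective : Function.Injective parts := by
  rintro ⟨_, _⟩ ⟨_, _⟩ rfl
  rfl

theorem lt_size_of_parts_ne_zero (l : SeqPartition) {i : ℕ} (hi : l.parts i ≠ 0) :
    i < l.size := by
  have hsub : Finset.range (i + 1) ⊆ l.parts.support := fun j hj =>
    Finsupp.mem_support_iff.2 fun h0 => hi <| Nat.eq_zero_of_le_zero <|
      h0 ▸ l.antitone (Nat.lt_succ_iff.1 (Finset.mem_range.1 hj))
  calc i < ∑ _j ∈ Finset.range (i + 1), 1 := by simp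
    _ ≤ ∑ j ∈ Finset.range (i + 1), l.parts j :=
      Finset.sum_le_sum fun j hj =>
        Nat.one_le_iff_ne_zero.2 (Finsupp.mem_support_iff.1 (hsub hj))
    _ ≤ ∑ j ∈ l.parts.support, l.parts j := Finset.sum_le_sum_of_subset hsub
    _ = l.size := rfl

theorem parts_eq_zero_of_size_le (l : SeqPartition) {r : ℕ} (hr : l.size ≤ r) :
    l.parts r = 0 := by
  by_contra h
  exact absurd (l.lt_size_of_parts_ne_zero h) (not_lt.2 hr)

theorem beta_eq_of_size_le (l : SeqPartition) {r : ℕ} (hr : l.size ≤ r) :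
    l.beta r = -((r : ℤ) + 1) := by
  simp [beta, l.parts_eq_zero_of_size_le hr]

theorem finite_setOf_size_eq (n : ℕ) : {l : SeqPartition | l.size = n}.Finite := by
  refine ((Finset.finsuppAntidiag (Finset.range n) n).finite_toSet.preimage
    parts_injective.injOn).subset fun l (hl : l.size = n) => ?_
  have hsupp : l.parts.support ⊆ Finset.range n := fun i hi =>
    Finset.mem_range.2 (hl ▸ l.lt_size_of_parts_ne_zero (Finsupp.mem_support_iff.1 hi))
  simp only [mem_preimage, Finset.mem_coe, Finset.mem_finsuppAntidiag]
  exact ⟨(Finset.sum_subset hsupp fun i _ hi => Finsupp.notMem_support_iff.1 hi).symm.trans hl,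
    hsupp⟩

def window (l : SeqPartition) (N : ℕ) : Finset ℤ := (Finset.range N).image l.beta

theorem card_window (l : SeqPartition) (N : ℕ) : (l.window N).card = N := by
  rw [window, Finset.card_image_of_injective _ l.beta_strictAnti.injective, Finset.card_range]

theorem coe_window {l : SeqPartition} {N : ℕ} (hN : l.size ≤ N) :
    (l.window N : Set ℤ) = l.betaSet ∩ Ici (-(N : ℤ)) := by
  ext z
  simp only [window, Finset.coe_image, Finset.coe_range, mem_image, mem_Iio, mem_inter_iff,
    mem_Ici, betaSet_eq_range_beta, mem_range]
  constructor
  · rintro ⟨r, hr, rfl⟩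
    exact ⟨⟨r, rfl⟩, by have := l.neg_succ_le_beta r; omega⟩
  · rintro ⟨⟨r, rfl⟩, hz⟩
    refine ⟨r, not_le.1 fun hr => ?_, rfl⟩
    have := l.beta_eq_of_size_le (hN.trans hr)
    omega

theorem Iio_subset_betaSet {l : SeqPartition} {N : ℕ} (hN : l.size ≤ N) :
    Iio (-(N : ℤ)) ⊆ l.betaSet := fun z (hz : z < _) =>
  ⟨(-z - 1).toNat, show l.beta _ = z by rw [l.beta_eq_of_size_le (by omega)]; omega⟩

theorem size_eq_sum_window {l : SeqPartition} {N : ℕ} (hN : l.size ≤ N) :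
    (l.size : ℤ) = ∑ z ∈ l.window N, z + ∑ r ∈ Finset.range N, ((r : ℤ) + 1) := by
  have hsupp : l.parts.support ⊆ Finset.range N := fun i hi =>
    Finset.mem_range.2 ((l.lt_size_of_parts_ne_zero (Finsupp.mem_support_iff.1 hi)).trans_le hN)
  rw [window, Finset.sum_image fun _ _ _ _ h => l.beta_strictAnti.injective h,
    ← Finset.sum_add_distrib]
  simp only [beta, sub_add_cancel]
  rw [size, Finsupp.sum_of_support_subset _ hsupp _ fun _ _ => rfl]
  push_cast
  rfl

theorem exists_beta_eq {f : ℕ → ℤ} (hf : StrictAnti f) {N : ℕ}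
    (hN : ∀ r, N ≤ r → f r = -((r : ℤ) + 1)) : ∃ l : SeqPartition, l.beta = f := by
  set g : ℕ → ℤ := fun r => f r + r + 1
  have hg : Antitone g := antitone_nat_of_succ_le fun r => by
    have := hf (show r < r + 1 by omega)
    simp only [g]
    push_cast
    omega
  have hg0 : ∀ r, 0 ≤ g r := fun r => by
    have := hg (le_max_left r N)
    have := hN _ (le_max_right r N)
    simp only [g] at *
    omega
  have hsupp : ∀ r, (g r).toNat ≠ 0 → r ∈ Finset.range N := fun r hr => by
    have := hN r
    simp only [g, Finset.mem_range] at *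
    omega
  refine ⟨⟨Finsupp.onFinset _ _ hsupp, fun i j hij => ?_⟩, funext fun r => ?_⟩
  · simpa using Int.toNat_le_toNat (hg hij)
  · simp only [beta, Finsupp.onFinset_apply, Int.toNat_of_nonneg (hg0 r), g]
    ring

theorem exists_betaSet_eq {S : Set ℤ} {N : ℕ} {F : Finset ℤ}
    (hF : ↑F = S ∩ Ici (-(N : ℤ))) (hcard : F.card = N) (hlow : Iio (-(N : ℤ)) ⊆ S) :
    ∃ l : SeqPartition, l.betaSet = S := by
  set e := F.orderEmbOfFin hcard
  have he : ∀ i, -(N : ℤ) ≤ e i := fun i => by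
    have : e i ∈ (F : Set ℤ) := F.orderEmbOfFin_mem hcard i
    rw [hF] at this
    exact this.2
  set f : ℕ → ℤ := fun r => if h : r < N then e (Fin.rev ⟨r, h⟩) else -((r : ℤ) + 1)
  have hf : StrictAnti f := strictAnti_nat_of_succ_lt fun r => by
    by_cases hr : r + 1 < N
    · simp only [f, dif_pos hr, dif_pos (Nat.lt_of_succ_lt hr)]
      exact e.strictMono (Fin.rev_lt_rev.2 (Fin.mk_lt_mk.2 r.lt_succ_self))
    · by_cases hr' : r < N
      · have := he (Fin.rev ⟨r, hr'⟩)
        simp only [f, dif_neg hr, dif_pos hr']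
        omega
      · simp only [f, dif_neg hr, dif_neg hr']
        omega
  obtain ⟨l, hl⟩ := exists_beta_eq hf (N := N) fun r hr => by simp [f, not_lt.2 hr]
  refine ⟨l, Set.ext fun z => ⟨?_, fun hz => ?_⟩⟩
  · rintro ⟨r, rfl⟩
    change l.beta r ∈ S
    rw [hl]
    by_cases hr : r < N
    · have : e (Fin.rev ⟨r, hr⟩) ∈ (F : Set ℤ) := F.orderEmbOfFin_mem hcard _
      rw [hF] at this
      simpa [f, hr] using this.1
    · exact hlow (by simp only [f, dif_neg hr, mem_Iio]; omega)
  · rw [betaSet_eq_range_beta, hl]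
    by_cases hzN : -(N : ℤ) ≤ z
    · have : z ∈ Set.range e := by
        rw [Finset.range_orderEmbOfFin, hF]
        exact ⟨hz, hzN⟩
      obtain ⟨i, rfl⟩ := this
      exact ⟨i.rev, by simp only [f, dif_pos i.rev.isLt, Fin.eta, Fin.rev_rev]⟩
    · refine ⟨(-z - 1).toNat, ?_⟩
      simp only [f, dif_neg (show ¬ (-z - 1).toNat < N by omega)]
      omega

theorem inter_Ici_insert_diff {α : Type*} [Preorder α] {S : Set α} {a x y : α} (hy : a ≤ y) :
    insert y (S \ {x}) ∩ Ici a = insert y ((S ∩ Ici a) \ {x}) := by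
  rw [Set.insert_inter_of_mem (Set.mem_Ici.2 hy), ← Set.inter_sdiff_right_comm]

theorem window_eq_insert_erase {l p : SeqPartition} {N : ℕ} {x y : ℤ}
    (hl : l.size ≤ N) (hp : p.size ≤ N) (hy : -(N : ℤ) ≤ y)
    (hβ : p.betaSet = insert y (l.betaSet \ {x})) :
    p.window N = insert y ((l.window N).erase x) := by
  apply Finset.coe_injective
  rw [coe_window hp, hβ, inter_Ici_insert_diff hy, Finset.coe_insert, Finset.coe_erase,
    coe_window hl]

theorem exists_betaSet_eq_insert_diff (l : SeqPartition) {x y : ℤ} (hx : x ∈ l.betaSet)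
    (hy : y ∉ l.betaSet) : ∃ p : SeqPartition, p.betaSet = insert y (l.betaSet \ {x}) := by
  set N := l.size + x.natAbs + y.natAbs + 1
  have hmem : ∀ {z}, z ∈ l.window N ↔ z ∈ l.betaSet ∧ -(N : ℤ) ≤ z := fun {z} => by
    rw [← Finset.mem_coe, coe_window (by omega)]
    rfl
  refine exists_betaSet_eq (N := N) (F := insert y ((l.window N).erase x)) ?_ ?_ ?_
  · rw [inter_Ici_insert_diff (by omega), Finset.coe_insert, Finset.coe_erase,
      coe_window (by omega)]
  · rw [Finset.card_insert_of_notMem fun h => hy (hmem.1 (Finset.mem_of_mem_erase h)).1,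
      Finset.card_erase_of_mem (hmem.2 ⟨hx, by omega⟩), card_window]
    omega
  · intro z hz
    have hz : z < -(N : ℤ) := hz
    exact Or.inr ⟨Iio_subset_betaSet (by omega) hz, by rintro rfl; omega⟩

theorem size_eq_of_betaSet_eq {l p : SeqPartition} {x y : ℤ} (hx : x ∈ l.betaSet)
    (hy : y ∉ l.betaSet) (hβ : p.betaSet = insert y (l.betaSet \ {x})) :
    (p.size : ℤ) = l.size + (y - x) := by
  set N := l.size + p.size + x.natAbs + y.natAbs
  have hxw : x ∈ l.window N := by
    rw [← Finset.mem_coe, coe_window (by omega)]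
    exact ⟨hx, by simp only [mem_Ici]; omega⟩
  have hyw : y ∉ (l.window N).erase x := fun h => by
    have := Finset.mem_coe.2 (Finset.mem_of_mem_erase h)
    rw [coe_window (by omega)] at this
    exact hy this.1
  rw [size_eq_sum_window (N := N) (by omega), size_eq_sum_window (l := l) (N := N) (by omega),
    window_eq_insert_erase (by omega) (by omega) (by omega) hβ, Finset.sum_insert hyw,
    Finset.sum_erase_eq_sub hxw]
  ring

theorem removeHook_of_mem {h : ℕ} {l m : SeqPartition} {x : ℤ} (hx : x + h ∈ l.betaSet)
    (hxn : x ∉ l.betaSet) (hm : m.betaSet = insert x (l.betaSet \ {x + h})) :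
    RemoveHook h l m :=
  ⟨x + h, hx, by rwa [add_sub_cancel_right], by rwa [add_sub_cancel_right]⟩

theorem removeHook_of_betaSet_eq {h : ℕ} {l p : SeqPartition} {x : ℤ} (hx : x ∈ l.betaSet)
    (hxh : x + h ∉ l.betaSet) (hp : p.betaSet = insert (x + h) (l.betaSet \ {x})) :
    RemoveHook h p l := by
  refine removeHook_of_mem (by rw [hp]; exact mem_insert _ _) ?_ ?_ <;> rw [hp]
  · grind
  · ext z; grind

theorem reflTransGen_removeHook_of_betaSet_eq {s : ℕ} (u : ℕ) {p q : SeqPartition} {x : ℤ}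
    (hx : x ∈ q.betaSet) (hX : x + u * s ∉ q.betaSet)
    (hp : p.betaSet = insert (x + u * s) (q.betaSet \ {x})) :
    ReflTransGen (RemoveHook s) p q := by
  induction u generalizing p q x with
  | zero => simp only [Nat.cast_zero, zero_mul, add_zero] at hX; exact absurd hx hX
  | succ u ih =>
    rw [show x + ((u + 1 : ℕ) : ℤ) * s = x + s + u * s by push_cast; ring] at hX hp
    -- If `x + s` is occupied, its bead drops to `x` and makes the remaining `u` moves;
    -- otherwise the bead at `x` first moves to `x + s`.
    by_cases hxs : x + s ∈ q.betaSet
    · obtain ⟨p₁, hp₁⟩ := q.exists_betaSet_eq_insert_diff hxs hX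
      refine .head (removeHook_of_mem (x := x) ?_ ?_ ?_) (ih hxs hX hp₁) <;> rw [hp]
      · grind
      · grind
      · rw [hp₁]; ext z; grind
    · obtain ⟨p₂, hp₂⟩ := q.exists_betaSet_eq_insert_diff hx hxs
      rcases u.eq_zero_or_pos with rfl | hu
      · simp only [Nat.cast_zero, zero_mul, add_zero] at hp
        exact .single (removeHook_of_betaSet_eq hx hxs hp)
      have hs : (0 : ℤ) < s := by
        have : (s : ℤ) ≠ 0 := fun h => hxs (by rwa [h, add_zero])
        omega
      have hne : x + s + u * s ≠ x + s := by
        have : (0 : ℤ) < u * s := mul_pos (by exact_mod_cast hu) hs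
        omega
      refine .tail (ih (x := x + s) ?_ ?_ ?_) (removeHook_of_betaSet_eq hx hxs hp₂) <;> rw [hp₂]
      · exact mem_insert _ _
      · grind
      · rw [hp]; ext z; grind

theorem RemoveHook.size_eq {h : ℕ} {l m : SeqPartition} (hr : RemoveHook h l m) :
    l.size = m.size + h := by
  obtain ⟨b, hb, hbh, hm⟩ := hr
  have := size_eq_of_betaSet_eq hb hbh hm
  omega

theorem size_modEq_of_reflTransGen {s : ℕ} {l m : SeqPartition}
    (h : ReflTransGen (RemoveHook s) l m) : l.size ≡ m.size [MOD s] := by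
  induction h with
  | refl => rfl
  | tail _ hbc ih => exact ih.trans (hbc.size_eq ▸ Nat.add_modEq_right)

theorem size_modEq_of_hasCore {s t : ℕ} (hst : s.Coprime t) {l l' σ τ : SeqPartition}
    (hlσ : HasCore s l σ) (hlτ : HasCore t l τ)
    (hl'σ : HasCore s l' σ) (hl'τ : HasCore t l' τ) :
    l.size ≡ l'.size [MOD s * t] :=
  (Nat.modEq_and_modEq_iff_modEq_mul hst).1
    ⟨(size_modEq_of_reflTransGen hlσ.1).trans (size_modEq_of_reflTransGen hl'σ.1).symm,
      (size_modEq_of_reflTransGen hlτ.1).trans (size_modEq_of_reflTransGen hl'τ.1).symm⟩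

theorem exists_addHook_mul {s t : ℕ} {l σ τ : SeqPartition} {x : ℤ} (hx : x ∈ l.betaSet)
    (hX : x + (s * t : ℕ) ∉ l.betaSet) (hσ : HasCore s l σ) (hτ : HasCore t l τ) :
    ∃ p : SeqPartition, p.betaSet = insert (x + (s * t : ℕ)) (l.betaSet \ {x}) ∧
      p.size = l.size + s * t ∧ HasCore s p σ ∧ HasCore t p τ := by
  obtain ⟨p, hp⟩ := l.exists_betaSet_eq_insert_diff hx hX
  have hsize := size_eq_of_betaSet_eq hx hX hp
  have hts : ((s * t : ℕ) : ℤ) = t * s := by push_cast; ring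
  have hst : ((s * t : ℕ) : ℤ) = s * t := by push_cast; ring
  refine ⟨p, hp, by omega, ⟨.trans ?_ hσ.1, hσ.2⟩, ⟨.trans ?_ hτ.1, hτ.2⟩⟩
  · rw [hts] at hX hp
    exact reflTransGen_removeHook_of_betaSet_eq t hx hX hp
  · rw [hst] at hX hp
    exact reflTransGen_removeHook_of_betaSet_eq s hx hX hp

theorem exists_size_eq_of_modEq {s t : ℕ} (hst : 0 < s * t) {l σ τ : SeqPartition}
    (hσ : HasCore s l σ) (hτ : HasCore t l τ) {n : ℕ} (hle : l.size ≤ n)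
    (hmod : n ≡ l.size [MOD s * t]) :
    ∃ p : SeqPartition, p.size = n ∧ HasCore s p σ ∧ HasCore t p τ := by
  obtain ⟨k, hk⟩ := (Nat.modEq_iff_dvd' hle).1 hmod.symm
  obtain rfl : n = l.size + s * t * k := by omega
  clear hle hmod hk
  induction k with
  | zero => exact ⟨l, rfl, hσ, hτ⟩
  | succ k ih =>
    obtain ⟨p, hp, hpσ, hpτ⟩ := ih
    have hX : p.beta 0 + (s * t : ℕ) ∉ p.betaSet := fun h => by
      have := le_beta_zero_of_mem h
      omega
    obtain ⟨q, -, hq, hqσ, hqτ⟩ := exists_addHook_mul (p.beta_mem_betaSet 0) hX hpσ hpτ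
    exact ⟨q, by rw [hq, hp]; ring, hqσ, hqτ⟩

theorem exists_max_mem_betaSet_intCast_eq (l : SeqPartition) (d : ℕ) [NeZero d] (c : ZMod d) :
    ∃ x ∈ l.betaSet, (x : ZMod d) = c ∧
      ∀ y ∈ l.betaSet, (y : ZMod d) = c → y ≤ x := by
  obtain ⟨z, rfl⟩ := ZMod.intCast_surjective c
  have hd : (1 : ℤ) ≤ d := by exact_mod_cast NeZero.one_le
  set w := z - d * (|z| + l.size + 1)
  have hw : w ∈ l.betaSet := Iio_subset_betaSet le_rfl (show w < -(l.size : ℤ) by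
    nlinarith [le_abs_self z, abs_nonneg z])
  obtain ⟨x, ⟨hx, hxc⟩, hmax⟩ :=
    Int.exists_greatest_of_bdd (P := fun y => y ∈ l.betaSet ∧ (y : ZMod d) = z)
    ⟨l.beta 0, fun y hy => le_beta_zero_of_mem hy.1⟩ ⟨w, hw, by simp [w]⟩
  exact ⟨x, hx, hxc, fun y hy hyc => hmax y ⟨hy, hyc⟩⟩

theorem le_ncard_setOf_size_eq_add_mul {s t : ℕ} (hst : 0 < s * t) {l σ τ : SeqPartition}
    (hσ : HasCore s l σ) (hτ : HasCore t l τ) :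
    s * t ≤
      {p : SeqPartition | p.size = l.size + s * t ∧ HasCore s p σ ∧ HasCore t p τ}.ncard := by
  have : NeZero (s * t) := ⟨hst.ne'⟩
  have key : ∀ c : ZMod (s * t), ∃ p : SeqPartition,
      (p.size = l.size + s * t ∧ HasCore s p σ ∧ HasCore t p τ) ∧
      ∃ y : ℤ, (y : ZMod (s * t)) = c ∧ p.betaSet \ l.betaSet = {y} := by
    intro c
    obtain ⟨x, hx, hxc, hmax⟩ := l.exists_max_mem_betaSet_intCast_eq (s * t) c
    have hXc : ((x + (s * t : ℕ) : ℤ) : ZMod (s * t)) = c := by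
      simp only [Int.cast_add, Int.cast_natCast, ZMod.natCast_self, add_zero, hxc]
    have hX : x + (s * t : ℕ) ∉ l.betaSet := fun h => by
      have := hmax _ h hXc
      omega
    obtain ⟨p, hp, hsize, hpσ, hpτ⟩ := exists_addHook_mul hx hX hσ hτ
    exact ⟨p, ⟨hsize, hpσ, hpτ⟩, _, hXc, by rw [hp]; ext z; grind⟩
  choose f hf y hyc hy using key
  calc s * t = (univ : Set (ZMod (s * t))).ncard := by rw [ncard_univ, Nat.card_zmod]
    _ ≤ _ := ncard_le_ncard_of_injOn f (fun c _ => hf c) (fun c _ c' _ h => by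
        have : ({y c} : Set ℤ) = {y c'} := by rw [← hy c, ← hy c', h]
        rw [← hyc c, ← hyc c', singleton_injective this])
      ((finite_setOf_size_eq _).subset fun _ hp => hp.1)

end SeqPartition

theorem stmt8_general (s t : ℕ) (hs : 1 < s) (ht : 1 < t) (hst : Nat.Coprime s t)
    (σ τ : SeqPartition)
    (m : ℕ)
    (hm : ∃ l : SeqPartition, l.size = m ∧ SeqPartition.HasCore s l σ ∧ SeqPartition.HasCore t l τ)
    (hmin : ∀ l : SeqPartition, SeqPartition.HasCore s l σ → SeqPartition.HasCore t l τ → m ≤ l.size)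
    (n : ℕ) :
    ((∃ l : SeqPartition, l.size = n ∧ SeqPartition.HasCore s l σ ∧ SeqPartition.HasCore t l τ) ↔
      (m ≤ n ∧ n ≡ m [MOD s * t])) ∧
    (m < n → n ≡ m [MOD s * t] →
      s * t ≤ {l : SeqPartition | l.size = n ∧ SeqPartition.HasCore s l σ ∧
        SeqPartition.HasCore t l τ}.ncard) := by
  obtain ⟨l₀, rfl, hl₀σ, hl₀τ⟩ := hm
  have hst₀ : 0 < s * t := Nat.mul_pos (by omega) (by omega)
  refine ⟨⟨fun ⟨l, hl, hlσ, hlτ⟩ => hl ▸ ⟨hmin l hlσ hlτ,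
      SeqPartition.size_modEq_of_hasCore hst hlσ hlτ hl₀σ hl₀τ⟩,
    fun ⟨hle, hmod⟩ => SeqPartition.exists_size_eq_of_modEq hst₀ hl₀σ hl₀τ hle hmod⟩,
    fun hlt hmod => ?_⟩
  have hstn : s * t ≤ n - l₀.size :=
    Nat.le_of_dvd (by omega) ((Nat.modEq_iff_dvd' hlt.le).1 hmod.symm)
  obtain ⟨l, hl, hlσ, hlτ⟩ := SeqPartition.exists_size_eq_of_modEq hst₀ hl₀σ hl₀τ
    (n := n - s * t) (by omega) ((Nat.sub_modulus_modEq_iff (by omega)).2 hmod)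
  have hn : l.size + s * t = n := by omega
  simpa only [hn] using SeqPartition.le_ncard_setOf_size_eq_add_mul hst₀ hlσ hlτ

/-- `P_{σ,τ}(n)` is non-empty iff `n ≥ m_{σ,τ}` and
`n ≡ m_{σ,τ} (mod st)`; and `|P_{σ,τ}(n)| ≥ st` when `n > m_{σ,τ}`. -/
theorem stmt8 (s t : ℕ) (hs : 1 < s) (ht : 1 < t) (hst : Nat.Coprime s t)
    (σ τ : SeqPartition) (hσ : SeqPartition.IsCore s σ) (hτ : SeqPartition.IsCore t τ)
    (m : ℕ)
    (hm : ∃ l : SeqPartition, l.size = m ∧ SeqPartition.HasCore s l σ ∧ SeqPartition.HasCore t l τ)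
    (hmin : ∀ l : SeqPartition, SeqPartition.HasCore s l σ → SeqPartition.HasCore t l τ → m ≤ l.size)
    (n : ℕ) :
    ((∃ l : SeqPartition, l.size = n ∧ SeqPartition.HasCore s l σ ∧ SeqPartition.HasCore t l τ) ↔
      (m ≤ n ∧ n ≡ m [MOD s * t])) ∧
    (m < n → n ≡ m [MOD s * t] →
      s * t ≤ {l : SeqPartition | l.size = n ∧ SeqPartition.HasCore s l σ ∧
        SeqPartition.HasCore t l τ}.ncard) :=
  stmt8_general s t hs ht hst σ τ m hm hmin n
end

section
/- Let s, t be coprime integers greater than 1 and x ∈ ℤ. Suppose λ and μ are partitions with the same s-core and the same t-core, and x is a pinch-point for λ. Then |μ| ≥ |λ|, with equality if and only if x is also a pinch-point for μ. -/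
open scoped symmDiff

section WeightDiff

variable {α : Type*} {A B C : Set α} {w w₁ w₂ : α → ℤ}

/-- `∑_{A \ B} w - ∑_{B \ A} w` when `A ∆ B` is finite (and junk `0` otherwise). -/
noncomputable def weightDiff (A B : Set α) (w : α → ℤ) : ℤ :=
  ∑ᶠ n, (A.indicator 1 n - B.indicator 1 n) * w n

lemma weightDiff_eq_sum {K : Finset α} (hK : A ∆ B ⊆ K) :
    weightDiff A B w = ∑ n ∈ K, (A.indicator 1 n - B.indicator 1 n) * w n := by
  refine finsum_eq_sum_of_support_subset _ fun n hn => hK ?_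
  by_contra h
  rw [Set.mem_symmDiff] at h
  by_cases hA : n ∈ A <;> simp_all

lemma weightDiff_eq_sum_toFinset (h : (A ∆ B).Finite) :
    weightDiff A B w = ∑ n ∈ h.toFinset, (A.indicator 1 n - B.indicator 1 n) * w n :=
  weightDiff_eq_sum (by simp)

lemma weightDiff_add_weightDiff (hAB : (A ∆ B).Finite) (hBC : (B ∆ C).Finite) :
    weightDiff A B w + weightDiff B C w = weightDiff A C w := by
  classical
  set K := hAB.toFinset ∪ hBC.toFinset
  have hAC : A ∆ C ⊆ K := by simpa [K] using symmDiff_triangle A B C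
  rw [weightDiff_eq_sum (K := K) (by simp [K]), weightDiff_eq_sum (K := K) (by simp [K]),
    weightDiff_eq_sum hAC, ← Finset.sum_add_distrib]
  exact Finset.sum_congr rfl fun n _ => by ring

lemma weightDiff_swap : weightDiff B A w = -weightDiff A B w := by
  rw [weightDiff, weightDiff, ← finsum_neg_distrib]
  congr 1
  funext n
  ring

lemma weightDiff_add (h : (A ∆ B).Finite) :
    weightDiff A B (w₁ + w₂) = weightDiff A B w₁ + weightDiff A B w₂ := by
  simp only [weightDiff_eq_sum_toFinset h, Pi.add_apply, mul_add, Finset.sum_add_distrib]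

lemma weightDiff_const_mul (h : (A ∆ B).Finite) (c : ℤ) :
    weightDiff A B (fun n => c * w n) = c * weightDiff A B w := by
  simp only [weightDiff_eq_sum_toFinset h, Finset.mul_sum]
  exact Finset.sum_congr rfl fun n _ => by ring

lemma weightDiff_nonneg (h : ∀ n, 0 ≤ (A.indicator 1 n - B.indicator 1 n) * w n) :
    0 ≤ weightDiff A B w :=
  finsum_nonneg h

lemma weightDiff_eq_zero_iff (hAB : (A ∆ B).Finite)
    (h : ∀ n, 0 ≤ (A.indicator 1 n - B.indicator 1 n) * w n) :
    weightDiff A B w = 0 ↔ ∀ n, (A.indicator 1 n - B.indicator 1 n) * w n = 0 := by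
  rw [weightDiff_eq_sum_toFinset hAB, Finset.sum_eq_zero_iff_of_nonneg fun n _ => h n]
  refine ⟨fun hK n => ?_, fun hall n _ => hall n⟩
  by_cases hn : n ∈ A ∆ B
  · exact hK n (by simpa using hn)
  · rw [Set.mem_symmDiff] at hn
    by_cases hA : n ∈ A <;> simp_all

lemma weightDiff_insert_sdiff_singleton {a a' : α} (ha : a ∈ A) (ha' : a' ∉ A) :
    weightDiff A (insert a' (A \ {a})) w = w a - w a' := by
  classical
  have hne : a ≠ a' := by rintro rfl; exact ha' ha
  rw [weightDiff_eq_sum (K := {a, a'}), Finset.sum_pair hne]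
  · simp [ha, ha', hne, hne.symm, sub_eq_add_neg]
  · intro n hn
    rw [Set.mem_symmDiff] at hn
    by_cases h1 : n = a <;> by_cases h2 : n = a' <;> simp_all

end WeightDiff

namespace SeqPartition

variable {N : ℕ} {n : ℤ}

lemma betaSet_strictAnti (l : SeqPartition) :
    StrictAnti fun r : ℕ => (l.parts r : ℤ) - (r + 1) := fun r r' h => by
  have := l.antitone h.le
  dsimp only
  omega

lemma mem_betaSet_iff (l : SeqPartition) (hN : l.parts.support ⊆ Finset.range N) :
    n ∈ l.betaSet ↔
      n < -N ∨ n ∈ (Finset.range N).image fun r => (l.parts r : ℤ) - (r + 1) := by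
  have hzero : ∀ r, N ≤ r → l.parts r = 0 := fun r hr =>
    Finsupp.notMem_support_iff.mp fun h => by have := Finset.mem_range.mp (hN h); omega
  simp only [betaSet, Set.mem_range, Finset.mem_image, Finset.mem_range]
  constructor
  · rintro ⟨r, rfl⟩
    by_cases hr : r < N
    · exact Or.inr ⟨r, hr, rfl⟩
    · left
      rw [hzero r (not_lt.mp hr)]
      omega
  · rintro (hn | ⟨r, -, rfl⟩)
    · refine ⟨(-n - 1).toNat, ?_⟩
      rw [hzero _ (by omega)]
      omega
    · exact ⟨r, rfl⟩

lemma betaSet_symmDiff_Iio_subset (l : SeqPartition) (hN : l.parts.support ⊆ Finset.range N) :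
    l.betaSet ∆ Set.Iio (-N : ℤ) ⊆
      ↑((Finset.range N).image fun r => (l.parts r : ℤ) - (r + 1)) := by
  intro n hn
  rw [Set.mem_symmDiff, mem_betaSet_iff l hN, Set.mem_Iio] at hn
  rcases hn with ⟨hn | hn, hIio⟩ | ⟨hn, hβ⟩
  · exact absurd hn hIio
  · exact hn
  · exact absurd (Or.inl hn) hβ

lemma betaSet_symmDiff_Iio_finite (l : SeqPartition) (hN : l.parts.support ⊆ Finset.range N) :
    (l.betaSet ∆ Set.Iio (-N : ℤ)).Finite :=
  (Finset.finite_toSet _).subset (l.betaSet_symmDiff_Iio_subset hN)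

lemma betaSet_symmDiff_finite (l m : SeqPartition) : (l.betaSet ∆ m.betaSet).Finite := by
  obtain ⟨N, hN⟩ := (l.parts.support ∪ m.parts.support).exists_nat_subset_range
  have hm := m.betaSet_symmDiff_Iio_finite (Finset.union_subset_right hN)
  rw [symmDiff_comm] at hm
  exact ((l.betaSet_symmDiff_Iio_finite (Finset.union_subset_left hN)).symmDiff_congr).mpr hm

lemma weightDiff_betaSet_Iio (l : SeqPartition) (hN : l.parts.support ⊆ Finset.range N) :
    weightDiff l.betaSet (Set.Iio (-N : ℤ)) id =
      l.size - ∑ r ∈ Finset.range N, ((r : ℤ) + 1) := by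
  have hsize : (l.size : ℤ) = ∑ r ∈ Finset.range N, (l.parts r : ℤ) := by
    rw [size, Finsupp.sum_of_support_subset l.parts hN _ fun _ _ => rfl, Nat.cast_sum]
  rw [weightDiff_eq_sum (l.betaSet_symmDiff_Iio_subset hN), hsize, ← Finset.sum_sub_distrib,
    Finset.sum_image fun r _ r' _ h => l.betaSet_strictAnti.injective h]
  refine Finset.sum_congr rfl fun r hr => ?_
  have hβ : (l.parts r : ℤ) - (r + 1) ∈ l.betaSet := ⟨r, rfl⟩
  have hIio : (l.parts r : ℤ) - (r + 1) ∉ Set.Iio (-N : ℤ) := by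
    simp only [Set.mem_Iio, not_lt]
    have := Finset.mem_range.mp hr
    omega
  simp [hβ, hIio]

lemma weightDiff_betaSet_id (l m : SeqPartition) :
    weightDiff m.betaSet l.betaSet id = m.size - l.size := by
  obtain ⟨N, hN⟩ := (l.parts.support ∪ m.parts.support).exists_nat_subset_range
  have hl := Finset.union_subset_left hN
  have hm := Finset.union_subset_right hN
  rw [← weightDiff_add_weightDiff (m.betaSet_symmDiff_Iio_finite hm)
    (by rw [symmDiff_comm]; exact l.betaSet_symmDiff_Iio_finite hl),
    weightDiff_swap (A := l.betaSet),
    m.weightDiff_betaSet_Iio hm, l.weightDiff_betaSet_Iio hl]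
  ring

variable {d : ℕ} {w : ℤ → ℤ} {l m c : SeqPartition}

lemma weightDiff_eq_zero_of_removeHook (hw : Function.Periodic w d) (h : RemoveHook d l m) :
    weightDiff l.betaSet m.betaSet w = 0 := by
  obtain ⟨b, hb, hb', hm⟩ := h
  rw [hm, weightDiff_insert_sdiff_singleton hb hb', hw.sub_eq, sub_self]

lemma weightDiff_eq_zero_of_reflTransGen (hw : Function.Periodic w d)
    (h : Relation.ReflTransGen (RemoveHook d) l c) : weightDiff l.betaSet c.betaSet w = 0 := by
  induction h with
  | refl => simp [weightDiff]
  | tail _ hstep ih =>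
    rw [← weightDiff_add_weightDiff (betaSet_symmDiff_finite _ _) (betaSet_symmDiff_finite _ _),
      ih, weightDiff_eq_zero_of_removeHook hw hstep, add_zero]

lemma weightDiff_eq_zero_of_hasCore (hw : Function.Periodic w d) (hl : HasCore d l c)
    (hm : HasCore d m c) : weightDiff m.betaSet l.betaSet w = 0 := by
  rw [← weightDiff_add_weightDiff (betaSet_symmDiff_finite m c) (betaSet_symmDiff_finite c l),
    weightDiff_swap (A := l.betaSet), weightDiff_eq_zero_of_reflTransGen hw hl.1,
    weightDiff_eq_zero_of_reflTransGen hw hm.1, neg_zero, add_zero]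

end SeqPartition

lemma Int.exists_eq_add_mul_of_mul_add_mul_eq {p q a b a' b' : ℤ} (hpq : IsCoprime p q)
    (hp : p ≠ 0) (h : p * a + q * b = p * a' + q * b') :
    ∃ k, a' = a + q * k ∧ b = b' + p * k := by
  obtain ⟨k, hk⟩ : p ∣ b - b' :=
    hpq.dvd_of_dvd_mul_left ⟨a' - a, by linear_combination h⟩
  refine ⟨k, mul_left_cancel₀ hp ?_, by linear_combination hk⟩
  linear_combination -h + q * hk

section Coordinates

variable {s t : ℕ} {x n : ℤ}

/- With the Bézout identity `s * gcdA + t * gcdB = 1`, `offsetS ≡ (n - x) * gcdB (mod s)` lies in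
`[1, s]` and `offsetT ≡ (n - x) * gcdA (mod t)` lies in `(-t, 0]`; these congruences make
`n - x - s * offsetT - t * offsetS` divisible by `s` and by `t`, hence by `s * t`. -/
def offsetS (s t : ℕ) (x n : ℤ) : ℤ := s - (x - n) * Int.gcdB s t % s

def offsetT (s t : ℕ) (x n : ℤ) : ℤ := -((x - n) * Int.gcdA s t % t)

def level (s t : ℕ) (x n : ℤ) : ℤ :=
  (n - x - s * offsetT s t x n - t * offsetS s t x n) / (s * t)

lemma offsetS_periodic : Function.Periodic (offsetS s t x) s := fun n => by
  rw [offsetS, offsetS, show (x - (n + s)) * Int.gcdB s t =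
    (x - n) * Int.gcdB s t + s * -Int.gcdB s t by ring, Int.add_mul_emod_self_left]

lemma offsetT_periodic : Function.Periodic (offsetT s t x) t := fun n => by
  rw [offsetT, offsetT, show (x - (n + t)) * Int.gcdA s t =
    (x - n) * Int.gcdA s t + t * -Int.gcdA s t by ring, Int.add_mul_emod_self_left]

lemma one_le_offsetS (hs : 0 < s) : 1 ≤ offsetS s t x n := by
  have := Int.emod_lt_of_pos ((x - n) * Int.gcdB s t) (by omega : (0 : ℤ) < s)
  rw [offsetS]
  omega

lemma offsetS_le (hs : 0 < s) : offsetS s t x n ≤ s := by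
  have := Int.emod_nonneg ((x - n) * Int.gcdB s t) (by omega : (s : ℤ) ≠ 0)
  rw [offsetS]
  omega

lemma neg_lt_offsetT (ht : 0 < t) : -(t : ℤ) < offsetT s t x n := by
  have := Int.emod_lt_of_pos ((x - n) * Int.gcdA s t) (by omega : (0 : ℤ) < t)
  rw [offsetT]
  omega

lemma offsetT_nonpos (ht : 0 < t) : offsetT s t x n ≤ 0 := by
  have := Int.emod_nonneg ((x - n) * Int.gcdA s t) (by omega : (t : ℤ) ≠ 0)
  rw [offsetT]
  omega

lemma eq_level_add_offset (hst : Nat.Coprime s t) :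
    n = x + s * t * level s t x n + s * offsetT s t x n + t * offsetS s t x n := by
  have hbezout : (s : ℤ) * Int.gcdA s t + t * Int.gcdB s t = 1 := by
    rw [← Int.gcd_eq_gcd_ab, Int.gcd_natCast_natCast, hst, Nat.cast_one]
  have hA := Int.emod_def ((x - n) * Int.gcdA s t) t
  have hB := Int.emod_def ((x - n) * Int.gcdB s t) s
  have hdvd : (s : ℤ) * t ∣ n - x - s * offsetT s t x n - t * offsetS s t x n := by
    refine (Nat.isCoprime_iff_coprime.mpr hst).mul_dvd ⟨(n - x) * Int.gcdA s t - offsetT s t x n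
      - t - t * ((x - n) * Int.gcdB s t / s), ?_⟩ ⟨(n - x) * Int.gcdB s t - offsetS s t x n
      - s * ((x - n) * Int.gcdA s t / t), ?_⟩
    · rw [offsetS]; linear_combination -(n - x) * hbezout + t * hB
    · rw [offsetT]; linear_combination -(n - x) * hbezout + s * hA
  rw [level, Int.mul_ediv_cancel' hdvd]
  ring

lemma mem_upSet_iff_level_pos (hs : 0 < s) (ht : 0 < t) (hst : Nat.Coprime s t) :
    n ∈ UpSet s t x ↔ 0 < level s t x n := by
  have hn := eq_level_add_offset (x := x) (n := n) hst
  have hS₁ := one_le_offsetS (t := t) (x := x) (n := n) hs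
  have hS₂ := offsetS_le (t := t) (x := x) (n := n) hs
  have hT₁ := neg_lt_offsetT (s := s) (x := x) (n := n) ht
  have hT₂ := offsetT_nonpos (s := s) (x := x) (n := n) ht
  constructor
  · rintro ⟨a, b, ha, hb, rfl⟩
    obtain ⟨k, hk₁, hk₂⟩ := Int.exists_eq_add_mul_of_mul_add_mul_eq
      (Nat.isCoprime_iff_coprime.mpr hst) (by omega) (a := a) (b := b)
      (a' := t * level s t x (x + a * s + b * t) + offsetT s t x (x + a * s + b * t))
      (b' := offsetS s t x (x + a * s + b * t)) (by linear_combination hn)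
    have hk : 0 ≤ k := by nlinarith
    nlinarith
  · intro hq
    have ha : 0 < t * level s t x n + offsetT s t x n := by nlinarith
    refine ⟨(t * level s t x n + offsetT s t x n).toNat, (offsetS s t x n).toNat,
      by omega, by omega, ?_⟩
    rw [Int.toNat_of_nonneg ha.le, Int.toNat_of_nonneg (by omega)]
    linear_combination hn

lemma mem_lowSet_iff_level_neg (hs : 0 < s) (ht : 0 < t) (hst : Nat.Coprime s t) :
    n ∈ LowSet s t x ↔ level s t x n < 0 := by
  have hn := eq_level_add_offset (x := x) (n := n) hst
  have hS₁ := one_le_offsetS (t := t) (x := x) (n := n) hs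
  have hS₂ := offsetS_le (t := t) (x := x) (n := n) hs
  have hT₁ := neg_lt_offsetT (s := s) (x := x) (n := n) ht
  have hT₂ := offsetT_nonpos (s := s) (x := x) (n := n) ht
  constructor
  · rintro ⟨a, b, rfl⟩
    obtain ⟨k, hk₁, hk₂⟩ := Int.exists_eq_add_mul_of_mul_add_mul_eq
      (Nat.isCoprime_iff_coprime.mpr hst) (by omega) (a := -a) (b := -b)
      (a' := t * level s t x (x - a * s - b * t) + offsetT s t x (x - a * s - b * t))
      (b' := offsetS s t x (x - a * s - b * t)) (by linear_combination hn)
    have hk : k < 0 := by nlinarith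
    nlinarith
  · intro hq
    refine ⟨(-(t * level s t x n + offsetT s t x n) - t).toNat, (s - offsetS s t x n).toNat, ?_⟩
    rw [Int.toNat_of_nonneg (by nlinarith), Int.toNat_of_nonneg (by omega)]
    linear_combination hn

end Coordinates

section PinchPoint

variable {s t : ℕ} {x : ℤ} {l m σ τ : SeqPartition}

lemma pinchPoint_iff_level (hs : 0 < s) (ht : 0 < t) (hst : Nat.Coprime s t) :
    PinchPoint s t x l ↔
      ∀ n, (level s t x n < 0 → n ∈ l.betaSet) ∧ (n ∈ l.betaSet → level s t x n ≤ 0) := by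
  simp only [PinchPoint, Set.subset_def, Set.eq_empty_iff_forall_notMem, Set.mem_inter_iff,
    not_and, mem_lowSet_iff_level_neg hs ht hst, mem_upSet_iff_level_pos hs ht hst, not_lt,
    ← forall_and]

lemma indicator_sub_mul_level_nonneg (hs : 0 < s) (ht : 0 < t) (hst : Nat.Coprime s t)
    (hl : PinchPoint s t x l) (m : SeqPartition) (n : ℤ) :
    0 ≤ (m.betaSet.indicator 1 n - l.betaSet.indicator 1 n) * level s t x n := by
  obtain ⟨hneg, hpos⟩ := (pinchPoint_iff_level hs ht hst).mp hl n
  by_cases hm : n ∈ m.betaSet <;> by_cases hl' : n ∈ l.betaSet <;> simp [hm, hl'] <;> grind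

lemma pinchPoint_iff_indicator_sub_mul_level_eq_zero (hs : 0 < s) (ht : 0 < t)
    (hst : Nat.Coprime s t) (hl : PinchPoint s t x l) :
    PinchPoint s t x m ↔
      ∀ n, (m.betaSet.indicator 1 n - l.betaSet.indicator 1 n) * level s t x n = 0 := by
  rw [pinchPoint_iff_level hs ht hst] at hl ⊢
  refine forall_congr' fun n => ?_
  obtain ⟨hneg, hpos⟩ := hl n
  by_cases hm : n ∈ m.betaSet <;> by_cases hl' : n ∈ l.betaSet <;> simp [hm, hl'] <;> grind

lemma size_sub_size_eq_mul_weightDiff_level (hst : Nat.Coprime s t)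
    (hls : SeqPartition.HasCore s l σ) (hms : SeqPartition.HasCore s m σ)
    (hlt : SeqPartition.HasCore t l τ) (hmt : SeqPartition.HasCore t m τ) :
    (m.size : ℤ) - l.size = s * t * weightDiff m.betaSet l.betaSet (level s t x) := by
  have hfin := SeqPartition.betaSet_symmDiff_finite m l
  have hsplit : (id : ℤ → ℤ) = (fun n => s * t * level s t x n) +
      (fun n => s * offsetT s t x n) + (fun n => t * offsetS s t x n + x) :=
    funext fun n => by
      simp only [id, Pi.add_apply]
      linear_combination eq_level_add_offset (x := x) (n := n) hst
  have hT : weightDiff m.betaSet l.betaSet (fun n => s * offsetT s t x n) = 0 :=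
    SeqPartition.weightDiff_eq_zero_of_hasCore (offsetT_periodic.comp _) hlt hmt
  have hS : weightDiff m.betaSet l.betaSet (fun n => t * offsetS s t x n + x) = 0 :=
    SeqPartition.weightDiff_eq_zero_of_hasCore (offsetS_periodic.comp fun y => t * y + x) hls hms
  rw [← SeqPartition.weightDiff_betaSet_id, hsplit, weightDiff_add hfin, weightDiff_add hfin, hT,
    hS, weightDiff_const_mul hfin, add_zero, add_zero]

end PinchPoint

/-- a partition with a pinch-point is minimal among partitions with
the same `s`-core and `t`-core, with equality of sizes iff the pinch-point is shared. -/
theorem stmt10 (s t : ℕ) (hs : 1 < s) (ht : 1 < t) (hst : Nat.Coprime s t)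
    (x : ℤ) (l m σ τ : SeqPartition)
    (hls : SeqPartition.HasCore s l σ) (hms : SeqPartition.HasCore s m σ)
    (hlt : SeqPartition.HasCore t l τ) (hmt : SeqPartition.HasCore t m τ)
    (hx : PinchPoint s t x l) :
    l.size ≤ m.size ∧ (m.size = l.size ↔ PinchPoint s t x m) := by
  have hs₀ : 0 < s := by omega
  have ht₀ : 0 < t := by omega
  have hst₀ : (0 : ℤ) < s * t := by positivity
  have hsize := size_sub_size_eq_mul_weightDiff_level (x := x) hst hls hms hlt hmt
  have hterm := indicator_sub_mul_level_nonneg hs₀ ht₀ hst hx m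
  have hnonneg := weightDiff_nonneg hterm
  refine ⟨by nlinarith, ?_⟩
  calc m.size = l.size ↔ (m.size : ℤ) - l.size = 0 := by omega
    _ ↔ weightDiff m.betaSet l.betaSet (level s t x) = 0 := by
      rw [hsize, mul_eq_zero, or_iff_right hst₀.ne']
    _ ↔ PinchPoint s t x m :=
      (weightDiff_eq_zero_iff (SeqPartition.betaSet_symmDiff_finite m l) hterm).trans
        (pinchPoint_iff_indicator_sub_mul_level_eq_zero hs₀ ht₀ hst hx).symm
end

section
/- Let α, β be partitions with α₁, β₁ ≤ t and α'₁, β'₁ ≤ s. If there are exactly two s×t (0,1)-matrices with row sums α₁, …, α_s and column sums β'₁, …, β'_t, then there exists a ∈ {1, …, s−1} with α_a = α_{a+1} and β = (α₁, …, α_{a−1}, α_a + 1, α_a − 1, α_{a+2}, …). -/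
/-!
A (0,1)-matrix whose rows decrease (row `i'` contained in row `i` for `i < i'`) is determined by
its column sums: entry `(i, j)` is `1` iff `i` is less than the `j`-th column sum. So one of the two
matrices, `m`, has an interchange, a submatrix `[[1, 0], [0, 1]]` in rows `a < a'`. Flipping any
interchange of `m` preserves all margins, so it produces the other matrix; as the flipped matrix
determines the interchange, `m` has only one. Then every other pair of rows is nested, which
forces `a' = a + 1` and makes rows `a`, `a + 1` differ exactly in the two columns `j, j'` of the
interchange. Moving the `1` in column `j'` from row `a + 1` to row `a` gives a matrix with
decreasing rows and the same column sums `β'`, so its row sums are `β`; they are `α` with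
`α_a` raised and `α_{a+1}` lowered by one.
-/

open Finset

namespace SeqPartition

theorem le_parts_iff_lt_ncard (l : SeqPartition) {w : ℕ} (hw : 0 < w) (i : ℕ) :
    w ≤ l.parts i ↔ i < {c | w ≤ l.parts c}.ncard := by
  have hlow : IsLowerSet {c | w ≤ l.parts c} := fun c c' hcc' hc => hc.trans (l.antitone hcc')
  have hfin : {c | w ≤ l.parts c}.Finite :=
    l.parts.support.finite_toSet.subset fun c (hc : w ≤ l.parts c) =>
      Finsupp.mem_support_iff.2 (by omega)
  obtain hU | ⟨n, hn⟩ := hlow.eq_univ_or_Iio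
  · exact absurd (hU ▸ hfin) Set.infinite_univ
  · rw [hn, ← coe_range, Set.ncard_coe_finset, card_range]
    exact Set.ext_iff.mp hn i

end SeqPartition

namespace BinaryMatrix

variable {ι κ : Type*}

def rowSet [Fintype κ] (m : ι → κ → Bool) (i : ι) : Finset κ :=
  univ.filter fun j => m i j = true

def colSet [Fintype ι] (m : ι → κ → Bool) (j : κ) : Finset ι :=
  univ.filter fun i => m i j = true

@[simp] lemma mem_rowSet [Fintype κ] {m : ι → κ → Bool} {i : ι} {j : κ} :
    j ∈ rowSet m i ↔ m i j = true := by
  simp [rowSet]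

@[simp] lemma mem_colSet [Fintype ι] {m : ι → κ → Bool} {i : ι} {j : κ} :
    i ∈ colSet m j ↔ m i j = true := by
  simp [colSet]

/-- Ryser's class `𝔄(r, c)`. -/
def matrixClass [Fintype ι] [Fintype κ] (r : ι → ℕ) (c : κ → ℕ) :
    Set (ι → κ → Bool) :=
  {m | (∀ i, #(rowSet m i) = r i) ∧ ∀ j, #(colSet m j) = c j}

lemma card_filter_flip_pair [Fintype κ] [DecidableEq κ] (p : κ → Bool) {j j' : κ}
    (h : p j' = !p j) :
    #(univ.filter fun c => (if c ∈ ({j, j'} : Finset κ) then !p c else p c) = true) =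
      #(univ.filter fun c => p c = true) := by
  refine card_equiv (Equiv.swap j j') fun c => ?_
  simp only [mem_filter, mem_univ, true_and, mem_insert, mem_singleton]
  rcases eq_or_ne c j with rfl | hj
  · simp [h]
  rcases eq_or_ne c j' with rfl | hj'
  · simp [h]
  simp [hj, hj', Equiv.swap_apply_of_ne_of_ne hj hj']

section flipRect

variable [DecidableEq ι] [DecidableEq κ]

def flipRect (m : ι → κ → Bool) (I : Finset ι) (J : Finset κ) : ι → κ → Bool :=
  fun r c => if r ∈ I ∧ c ∈ J then !m r c else m r c

variable {m : ι → κ → Bool} {I : Finset ι} {J : Finset κ}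

lemma flipRect_ne_iff {r : ι} {c : κ} : flipRect m I J r c ≠ m r c ↔ r ∈ I ∧ c ∈ J := by
  unfold flipRect; split_ifs with h <;> simp [h]

lemma flipRect_ne_self {i : ι} {j : κ} (hi : i ∈ I) (hj : j ∈ J) : flipRect m I J ≠ m :=
  fun he => flipRect_ne_iff.2 ⟨hi, hj⟩ (congrFun (congrFun he i) j)

lemma rowSet_flipRect_of_notMem [Fintype κ] {r : ι} (hr : r ∉ I) :
    rowSet (flipRect m I J) r = rowSet m r := by
  ext c; simp [flipRect, hr]

lemma colSet_flipRect_of_notMem [Fintype ι] {c : κ} (hc : c ∉ J) :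
    colSet (flipRect m I J) c = colSet m c := by
  ext r; simp [flipRect, hc]

lemma card_rowSet_flipRect_pair [Fintype κ] {r : ι} {j j' : κ} (hr : r ∈ I)
    (h : m r j' = !m r j) :
    #(rowSet (flipRect m I {j, j'}) r) = #(rowSet m r) := by
  refine (congrArg card ?_).trans (card_filter_flip_pair (m r) h)
  ext c; simp [flipRect, hr]

lemma card_colSet_flipRect_pair [Fintype ι] {c : κ} {i i' : ι} (hc : c ∈ J)
    (h : m i' c = !m i c) :
    #(colSet (flipRect m {i, i'} J) c) = #(colSet m c) := by
  refine (congrArg card ?_).trans (card_filter_flip_pair (fun r => m r c) h)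
  ext r; simp [flipRect, hc]

lemma rowSet_flipRect_singleton_of_false [Fintype κ] {r : ι} {j : κ} (hr : r ∈ I)
    (h : m r j = false) : rowSet (flipRect m I {j}) r = insert j (rowSet m r) := by
  ext c; by_cases hc : c = j <;> simp [flipRect, hr, hc, h]

lemma rowSet_flipRect_singleton_of_true [Fintype κ] {r : ι} {j : κ} (hr : r ∈ I)
    (h : m r j = true) : rowSet (flipRect m I {j}) r = (rowSet m r).erase j := by
  ext c; by_cases hc : c = j <;> simp [flipRect, hr, hc, h]

end flipRect

/-- An interchange in Ryser's sense. -/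
def IsInterchange (m : ι → κ → Bool) (i i' : ι) (j j' : κ) : Prop :=
  m i j = true ∧ m i j' = false ∧ m i' j = false ∧ m i' j' = true

namespace IsInterchange

variable [DecidableEq ι] [DecidableEq κ] {m : ι → κ → Bool} {i i' : ι} {j j' : κ}

lemma card_rowSet_flipRect [Fintype κ] (h : IsInterchange m i i' j j') (r : ι) :
    #(rowSet (flipRect m {i, i'} {j, j'}) r) = #(rowSet m r) := by
  obtain ⟨h1, h2, h3, h4⟩ := h
  by_cases hr : r ∈ ({i, i'} : Finset ι)
  · refine card_rowSet_flipRect_pair hr ?_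
    rcases mem_insert.1 hr with rfl | hr <;> simp_all
  · rw [rowSet_flipRect_of_notMem hr]

lemma card_colSet_flipRect [Fintype ι] (h : IsInterchange m i i' j j') (c : κ) :
    #(colSet (flipRect m {i, i'} {j, j'}) c) = #(colSet m c) := by
  obtain ⟨h1, h2, h3, h4⟩ := h
  by_cases hc : c ∈ ({j, j'} : Finset κ)
  · refine card_colSet_flipRect_pair hc ?_
    rcases mem_insert.1 hc with rfl | hc <;> simp_all
  · rw [colSet_flipRect_of_notMem hc]

lemma eq_of_flipRect_eq [LinearOrder ι] {i₂ i₂' : ι} {j₂ j₂' : κ}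
    (h : IsInterchange m i i' j j') (h₂ : IsInterchange m i₂ i₂' j₂ j₂') (hi : i < i')
    (hi₂ : i₂ < i₂')
    (he : flipRect m {i, i'} {j, j'} = flipRect m {i₂, i₂'} {j₂, j₂'}) :
    i = i₂ ∧ i' = i₂' ∧ j = j₂ ∧ j' = j₂' := by
  have hrect : ∀ r c, (r ∈ ({i, i'} : Finset ι) ∧ c ∈ ({j, j'} : Finset κ)) ↔
      (r ∈ ({i₂, i₂'} : Finset ι) ∧ c ∈ ({j₂, j₂'} : Finset κ)) := fun r c => by
    rw [← flipRect_ne_iff, ← flipRect_ne_iff, he]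
  have e1 := (hrect i j).1 (by simp)
  have e2 := (hrect i' j').1 (by simp)
  have e3 := (hrect i₂ j₂).2 (by simp)
  have e4 := (hrect i₂' j₂').2 (by simp)
  simp only [mem_insert, mem_singleton] at e1 e2 e3 e4
  obtain ⟨h1, h2, h3, h4⟩ := h
  obtain ⟨k1, k2, k3, k4⟩ := h₂
  grind

end IsInterchange

lemma rowSet_subset_of_forall_not_isInterchange [Fintype κ] {m : ι → κ → Bool} {i i' : ι}
    (hcard : #(rowSet m i') ≤ #(rowSet m i)) (h : ∀ j j', ¬ IsInterchange m i i' j j') :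
    rowSet m i' ⊆ rowSet m i := by
  by_contra hsub
  obtain ⟨j', hj'i', hj'i⟩ := not_subset.1 hsub
  have hsub' : ¬ rowSet m i ⊆ rowSet m i' := fun hs =>
    hj'i (eq_of_subset_of_card_le hs hcard ▸ hj'i')
  obtain ⟨j, hji, hji'⟩ := not_subset.1 hsub'
  simp only [mem_rowSet, Bool.not_eq_true] at hj'i' hj'i hji hji'
  exact h j j' ⟨hji, hj'i, hji', hj'i'⟩

lemma exists_isInterchange_of_not_antitone [LinearOrder ι] [Fintype κ] {m : ι → κ → Bool}
    (hcard : Antitone fun i => #(rowSet m i)) (h : ¬ Antitone (rowSet m)) :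
    ∃ i i' j j', i < i' ∧ IsInterchange m i i' j j' := by
  by_contra! hno
  refine h fun i i' hii' => ?_
  rcases hii'.lt_or_eq with hlt | rfl
  · exact rowSet_subset_of_forall_not_isInterchange (hcard hii') (hno i i' · · hlt)
  · exact subset_rfl

lemma mem_colSet_iff_lt_card {s : ℕ} [Fintype κ] {m : Fin s → κ → Bool}
    (hm : Antitone (rowSet m)) (i : Fin s) (j : κ) :
    m i j = true ↔ (i : ℕ) < #(colSet m j) := by
  have hlow : IsLowerSet (colSet m j : Set (Fin s)) := fun r r' hrr' hr => by
    simp only [mem_coe, mem_colSet, ← mem_rowSet] at hr ⊢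
    exact hm hrr' hr
  rw [← mem_colSet]
  obtain hU | ⟨n, hn⟩ := hlow.eq_univ_or_Iio
  · rw [coe_eq_univ.1 hU, card_univ, Fintype.card_fin]
    simp
  · rw [← coe_Iio, coe_inj] at hn
    rw [hn, Fin.card_Iio, mem_Iio, Fin.lt_def]

lemma eq_of_antitone_rowSet {s : ℕ} [Fintype κ] {m₁ m₂ : Fin s → κ → Bool}
    (h₁ : Antitone (rowSet m₁)) (h₂ : Antitone (rowSet m₂))
    (hcol : ∀ j, #(colSet m₁ j) = #(colSet m₂ j)) : m₁ = m₂ := by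
  funext i j
  rw [Bool.eq_iff_iff, mem_colSet_iff_lt_card h₁, mem_colSet_iff_lt_card h₂, hcol]

lemma card_rowSet_eq_parts {s t : ℕ} {m : Fin s → Fin t → Bool} (hm : Antitone (rowSet m))
    (β : SeqPartition) (hβ : β.parts 0 ≤ t)
    (hcol : ∀ j : Fin t, #(colSet m j) = {c | (j : ℕ) + 1 ≤ β.parts c}.ncard) (i : Fin s) :
    #(rowSet m i) = β.parts i := by
  have hrow : rowSet m i = univ.filter fun j : Fin t => (j : ℕ) < β.parts i := by
    ext j
    rw [mem_rowSet, mem_colSet_iff_lt_card hm, hcol, ← β.le_parts_iff_lt_ncard (Nat.succ_pos _)]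
    simp
  rw [hrow, Fin.card_filter_val_lt]
  exact min_eq_right ((β.antitone (Nat.zero_le _)).trans hβ)

def IsUniqueInterchange {s : ℕ} {κ : Type*} (m : Fin s → κ → Bool) (a a' : Fin s)
    (jj jj' : κ) : Prop :=
  a < a' ∧ IsInterchange m a a' jj jj' ∧
    ∀ i i' j j', i < i' → IsInterchange m i i' j j' →
      i = a ∧ i' = a' ∧ j = jj ∧ j' = jj'

theorem exists_isUniqueInterchange_of_ncard_eq_two {s : ℕ} {κ : Type*} [Fintype κ]
    [DecidableEq κ] {r : Fin s → ℕ} (hr : Antitone r) {c : κ → ℕ}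
    (h2 : (matrixClass r c).ncard = 2) :
    ∃ m ∈ matrixClass r c, ∃ a a' jj jj', IsUniqueInterchange m a a' jj jj' := by
  set S := matrixClass r c
  have hcard : ∀ m ∈ S, Antitone fun i => #(rowSet m i) := fun m hm i i' hii' => by
    simpa only [hm.1] using hr hii'
  obtain ⟨m, hmS, hm⟩ : ∃ m ∈ S, ¬ Antitone (rowSet m) := by
    by_contra! hall
    have : S.ncard ≤ 1 := (Set.ncard_le_one_iff S.toFinite).2 fun {m₁ m₂} h₁ h₂ =>
      eq_of_antitone_rowSet (hall m₁ h₁) (hall m₂ h₂) fun j => by rw [h₁.2, h₂.2]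
    omega
  obtain ⟨a, a', jj, jj', hlt, hI⟩ := exists_isInterchange_of_not_antitone (hcard m hmS) hm
  have hflip : ∀ i i' j j', IsInterchange m i i' j j' →
      flipRect m {i, i'} {j, j'} ∈ S \ {m} :=
    fun i i' j j' hI => ⟨⟨fun k => by rw [hI.card_rowSet_flipRect, hmS.1],
      fun k => by rw [hI.card_colSet_flipRect, hmS.2]⟩,
      flipRect_ne_self (mem_insert_self _ _) (mem_insert_self _ _)⟩
  have hone : (S \ {m}).ncard ≤ 1 := by rw [Set.ncard_sdiff_singleton_of_mem hmS, h2]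
  refine ⟨m, hmS, a, a', jj, jj', hlt, hI, fun i i' j j' hii' hI' => ?_⟩
  exact hI'.eq_of_flipRect_eq hI hii' hlt
    ((Set.ncard_le_one_iff (S \ {m}).toFinite).1 hone (hflip i i' j j' hI') (hflip a a' jj jj' hI))

namespace IsUniqueInterchange

variable {s : ℕ} {κ : Type*} {m : Fin s → κ → Bool} {a a' : Fin s} {jj jj' : κ}

lemma card_colSet_flipRect [DecidableEq κ] (h : IsUniqueInterchange m a a' jj jj') (j : κ) :
    #(colSet (flipRect m {a, a'} {jj'}) j) = #(colSet m j) := by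
  rcases eq_or_ne j jj' with rfl | hj
  · exact card_colSet_flipRect_pair (mem_singleton_self _) (by simp [h.2.1.2.1, h.2.1.2.2.2])
  · rw [colSet_flipRect_of_notMem (by simpa using hj)]

variable [Fintype κ]

lemma rowSet_subset (h : IsUniqueInterchange m a a' jj jj')
    (hcard : Antitone fun i => #(rowSet m i)) {i i' : Fin s} (hii' : i < i')
    (hne : ¬(i = a ∧ i' = a')) : rowSet m i' ⊆ rowSet m i :=
  rowSet_subset_of_forall_not_isInterchange (hcard hii'.le) fun j j' hI =>
    hne ⟨(h.2.2 i i' j j' hii' hI).1, (h.2.2 i i' j j' hii' hI).2.1⟩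

lemma mem_left_of_mem_right (h : IsUniqueInterchange m a a' jj jj') {j : κ}
    (hj : j ∈ rowSet m a') (hne : j ≠ jj') : j ∈ rowSet m a := by
  obtain ⟨hlt, ⟨h1, -, h3, -⟩, huniq⟩ := h
  by_contra hja
  simp only [mem_rowSet, Bool.not_eq_true] at hj hja
  exact hne (huniq a a' jj j hlt ⟨h1, hja, h3, hj⟩).2.2.2

lemma mem_right_of_mem_left (h : IsUniqueInterchange m a a' jj jj') {j : κ}
    (hj : j ∈ rowSet m a) (hne : j ≠ jj) : j ∈ rowSet m a' := by
  obtain ⟨hlt, ⟨-, h2, -, h4⟩, huniq⟩ := h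
  by_contra hja'
  simp only [mem_rowSet, Bool.not_eq_true] at hj hja'
  exact hne (huniq a a' j jj' hlt ⟨hj, h2, hja', h4⟩).2.2.1

lemma val_succ (h : IsUniqueInterchange m a a' jj jj') (hcard : Antitone fun i => #(rowSet m i)) :
    (a' : ℕ) = a + 1 := by
  obtain ⟨-, h2, -, h4⟩ := h.2.1
  have hlt := h.1
  by_contra hne
  have hk : (a : ℕ) + 1 < s := by omega
  have hak : a < ⟨a + 1, hk⟩ := Fin.lt_def.2 (Nat.lt_succ_self _)
  have hka' : (⟨a + 1, hk⟩ : Fin s) < a' := by simp only [Fin.lt_def] at hlt ⊢; omega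
  have hsub := (h.rowSet_subset hcard hka' fun he => hak.ne' he.1).trans
    (h.rowSet_subset hcard hak fun he => hka'.ne he.2)
  simpa [h2, h4] using hsub (mem_rowSet.2 h4)

section flip

variable [DecidableEq κ]

lemma card_rowSet_eq (h : IsUniqueInterchange m a a' jj jj') :
    #(rowSet m a) = #(rowSet m a') := by
  refine card_equiv (Equiv.swap jj jj') fun j => ?_
  obtain ⟨h1, h2, h3, h4⟩ := h.2.1
  rcases eq_or_ne j jj with rfl | hj
  · simp [h1, h4]
  rcases eq_or_ne j jj' with rfl | hj'
  · simp [h2, h3]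
  rw [Equiv.swap_apply_of_ne_of_ne hj hj']
  exact ⟨fun hm => h.mem_right_of_mem_left hm hj, fun hm => h.mem_left_of_mem_right hm hj'⟩

lemma rowSet_flipRect_left (h : IsUniqueInterchange m a a' jj jj') :
    rowSet (flipRect m {a, a'} {jj'}) a = insert jj' (rowSet m a) :=
  rowSet_flipRect_singleton_of_false (mem_insert_self _ _) h.2.1.2.1

lemma rowSet_flipRect_right (h : IsUniqueInterchange m a a' jj jj') :
    rowSet (flipRect m {a, a'} {jj'}) a' = (rowSet m a').erase jj' :=
  rowSet_flipRect_singleton_of_true (by simp) h.2.1.2.2.2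

lemma rowSet_flipRect_of_ne {r : Fin s} (hra : r ≠ a) (hra' : r ≠ a') :
    rowSet (flipRect m {a, a'} {jj'}) r = rowSet m r :=
  rowSet_flipRect_of_notMem (by simp [hra, hra'])

lemma antitone_rowSet_flipRect (h : IsUniqueInterchange m a a' jj jj')
    (hcard : Antitone fun i => #(rowSet m i)) : Antitone (rowSet (flipRect m {a, a'} {jj'})) := by
  have hlt := h.1
  have hjj' : jj' ∉ rowSet m a := by simp [h.2.1.2.1]
  intro r r' hle
  obtain hrr' | rfl := hle.lt_or_eq
  swap
  · exact subset_rfl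
  by_cases hra : r = a
  · obtain rfl := hra
    rw [h.rowSet_flipRect_left]
    by_cases hr'a' : r' = a'
    · obtain rfl := hr'a'
      rw [h.rowSet_flipRect_right]
      intro x hx
      rw [mem_erase] at hx
      exact mem_insert_of_mem (h.mem_left_of_mem_right hx.2 hx.1)
    · rw [rowSet_flipRect_of_ne hrr'.ne' hr'a']
      exact (h.rowSet_subset hcard hrr' fun he => hr'a' he.2).trans (subset_insert _ _)
  by_cases hra' : r = a'
  · obtain rfl := hra'
    rw [h.rowSet_flipRect_right, rowSet_flipRect_of_ne (hlt.trans hrr').ne' hrr'.ne']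
    intro x hx
    have hxa := h.rowSet_subset hcard (hlt.trans hrr') (fun he => hrr'.ne' he.2) hx
    exact mem_erase.2 ⟨fun hx' => hjj' (hx' ▸ hxa), h.rowSet_subset hcard hrr' (hra ·.1) hx⟩
  rw [rowSet_flipRect_of_ne hra hra']
  by_cases hr'a : r' = a
  · obtain rfl := hr'a
    rw [h.rowSet_flipRect_left]
    exact insert_subset
      (h.rowSet_subset hcard (hrr'.trans hlt) (hra ·.1) (mem_rowSet.2 h.2.1.2.2.2))
      (h.rowSet_subset hcard hrr' (hra ·.1))
  by_cases hr'a' : r' = a'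
  · obtain rfl := hr'a'
    rw [h.rowSet_flipRect_right]
    exact (erase_subset _ _).trans (h.rowSet_subset hcard hrr' (hra ·.1))
  rw [rowSet_flipRect_of_ne hr'a hr'a']
  exact h.rowSet_subset hcard hrr' (hra ·.1)

end flip

end IsUniqueInterchange

theorem IsUniqueInterchange.exists_parts_eq {s t : ℕ} {m : Fin s → Fin t → Bool}
    {a a' : Fin s} {jj jj' : Fin t}
    (h : IsUniqueInterchange m a a' jj jj') {α β : SeqPartition}
    (hrow : ∀ i : Fin s, #(rowSet m i) = α.parts i)
    (hcol : ∀ j : Fin t, #(colSet m j) = {c | (j : ℕ) + 1 ≤ β.parts c}.ncard)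
    (hβ1 : β.parts 0 ≤ t) (hαl : α.parts s = 0) (hβl : β.parts s = 0) :
    ∃ a : ℕ, a + 1 < s ∧ α.parts a = α.parts (a + 1) ∧
      ∀ i : ℕ, β.parts i =
        if i < a then α.parts i
        else if i = a then α.parts a + 1
        else if i = a + 1 then α.parts a - 1
        else α.parts i := by
  have hcard : Antitone fun i => #(rowSet m i) := fun i i' hii' => by
    simpa only [hrow] using α.antitone hii'
  have hsucc : (a' : ℕ) = a + 1 := h.val_succ hcard
  have hαa : α.parts a = α.parts a' := by rw [← hrow, ← hrow, h.card_rowSet_eq]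
  have hβR := card_rowSet_eq_parts (h.antitone_rowSet_flipRect hcard) β hβ1 fun j => by
    rw [h.card_colSet_flipRect, hcol]
  refine ⟨a, hsucc ▸ a'.isLt, hsucc ▸ hαa, fun i => ?_⟩
  obtain hi | hi := lt_or_ge i s
  · rw [← hβR ⟨i, hi⟩]
    rcases eq_or_ne (⟨i, hi⟩ : Fin s) a with hia | hia
    · obtain rfl : i = a := congrArg Fin.val hia
      rw [hia, h.rowSet_flipRect_left, card_insert_of_notMem (by simp [h.2.1.2.1]), hrow]
      simp
    rcases eq_or_ne (⟨i, hi⟩ : Fin s) a' with hia' | hia'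
    · obtain rfl : i = a + 1 := hsucc ▸ congrArg Fin.val hia'
      rw [hia', h.rowSet_flipRect_right, card_erase_of_mem (by simp [h.2.1.2.2.2]), hrow, ← hαa]
      simp
    · rw [rowSet_flipRect_of_ne hia hia', hrow]
      have hia : i ≠ a := fun he => hia (Fin.ext he)
      have hia' : i ≠ a + 1 := fun he => hia' (Fin.ext (he.trans hsucc.symm))
      simp [hia, hia']
  · have hβ0 : β.parts i = 0 := Nat.eq_zero_of_le_zero (hβl ▸ β.antitone hi)
    have hα0 : α.parts i = 0 := Nat.eq_zero_of_le_zero (hαl ▸ α.antitone hi)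
    have := a'.isLt
    split_ifs <;> omega

end BinaryMatrix

theorem stmt14_general (s t : ℕ)
    (α β : SeqPartition)
    (hβ1 : β.parts 0 ≤ t)
    (hαl : α.parts s = 0) (hβl : β.parts s = 0)
    (h2 : {m : Fin s → Fin t → Bool |
        (∀ i : Fin s, (Finset.univ.filter fun j : Fin t => m i j = true).card =
          α.parts (i : ℕ)) ∧
        (∀ j : Fin t, (Finset.univ.filter fun i : Fin s => m i j = true).card =
          Set.ncard {c : ℕ | (j : ℕ) + 1 ≤ β.parts c})}.ncard = 2) :
    ∃ a : ℕ, a + 1 < s ∧ α.parts a = α.parts (a + 1) ∧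
      ∀ i : ℕ, β.parts i =
        if i < a then α.parts i
        else if i = a then α.parts a + 1
        else if i = a + 1 then α.parts a - 1
        else α.parts i := by
  obtain ⟨m, ⟨hrow, hcol⟩, a, a', jj, jj', h⟩ :=
    BinaryMatrix.exists_isUniqueInterchange_of_ncard_eq_two (r := fun i : Fin s => α.parts i)
      (fun i i' hii' => α.antitone hii') h2
  exact h.exists_parts_eq hrow hcol hβ1 hαl hβl

/-- if there are exactly two `s×t` (0,1)-matrices with row sums
`α₁,…,α_s` and column sums `β'₁,…,β'_t`, then (0-indexed) there is `a` with
`a+1 < s`, `α_a = α_{a+1}` and `β = (α₀,…,α_{a−1}, α_a + 1, α_a − 1, α_{a+2},…)`. -/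
theorem stmt14 (s t : ℕ) (hs : 1 < s) (ht : 1 < t)
    (α β : SeqPartition)
    (hα1 : α.parts 0 ≤ t) (hβ1 : β.parts 0 ≤ t)
    (hαl : α.parts s = 0) (hβl : β.parts s = 0)
    (h2 : {m : Fin s → Fin t → Bool |
        (∀ i : Fin s, (Finset.univ.filter fun j : Fin t => m i j = true).card =
          α.parts (i : ℕ)) ∧
        (∀ j : Fin t, (Finset.univ.filter fun i : Fin s => m i j = true).card =
          Set.ncard {c : ℕ | (j : ℕ) + 1 ≤ β.parts c})}.ncard = 2) :
    ∃ a : ℕ, a + 1 < s ∧ α.parts a = α.parts (a + 1) ∧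
      ∀ i : ℕ, β.parts i =
        if i < a then α.parts i
        else if i = a then α.parts a + 1
        else if i = a + 1 then α.parts a - 1
        else α.parts i :=
  stmt14_general s t α β hβ1 hαl hβl h2
end
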